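/- arXiv:1204.0409 — 3 statements merged into one kernel-verified Lean document; each statement's English description precedes it below -/
import Mathlib

section
/- The last peak position map π(x) = f^{n_f(x)}(x) is f-invariant on H(f,φ): for every x ∈ H(f,φ) and every integer k, π(f^k x) = π(x). Moreover π(x) lies on the f-orbit of x and π ∘ π = π. -/
open Filter Topology MeasureTheory

variable {X : Type*} [MetricSpace X]

noncomputable def cocycle (f : X ≃ₜ X) (φ : X → ℝ) : ℤ → X → ℝ
  | Int.ofNat n, x => ∑ i ∈ Finset.range n, φ ((⇑f)^[i] x)
  | Int.negSucc n, x => -∑ i ∈ Finset.range (n + 1), φ ((⇑f.symm)^[i + 1] x)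

def zpowIter (f : X ≃ₜ X) (k : ℤ) (x : X) : X :=
  if 0 ≤ k then (⇑f)^[k.toNat] x else (⇑f.symm)^[(-k).toNat] x

lemma zpowIter_eq (f : X ≃ₜ X) (k : ℤ) (x : X) : zpowIter f k x = (f.toEquiv ^ k) x := by
  rcases k with n | n
  · rw [zpowIter, if_pos (by exact Int.ofNat_nonneg n)]
    show (⇑f)^[n] x = (f.toEquiv ^ (n : ℤ)) x
    rw [zpow_natCast, Equiv.Perm.coe_pow]
    rfl
  · have h : ¬ (0 : ℤ) ≤ Int.negSucc n := by
      simp [Int.negSucc_not_nonneg]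
    rw [zpowIter, if_neg h]
    show (⇑f.symm)^[n+1] x = _
    rw [zpow_negSucc, ← inv_pow, Equiv.Perm.coe_pow]
    rfl

lemma zpowIter_add (f : X ≃ₜ X) (a b : ℤ) (x : X) :
    zpowIter f a (zpowIter f b x) = zpowIter f (b + a) x := by
  simp only [zpowIter_eq, ← Equiv.Perm.mul_apply, ← zpow_add, add_comm]

lemma cocycle_zero (f : X ≃ₜ X) (φ : X → ℝ) (x : X) : cocycle f φ 0 x = 0 := by
  show cocycle f φ (Int.ofNat 0) x = 0
  simp [cocycle]

lemma zpowIter_ofNat (f : X ≃ₜ X) (n : ℕ) (x : X) :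
    zpowIter f (Int.ofNat n) x = (⇑f)^[n] x := rfl

lemma zpowIter_negSucc (f : X ≃ₜ X) (n : ℕ) (x : X) :
    zpowIter f (Int.negSucc n) x = (⇑f.symm)^[n + 1] x := rfl

lemma cocycle_succ (f : X ≃ₜ X) (φ : X → ℝ) (n : ℤ) (x : X) :
    cocycle f φ (n + 1) x = cocycle f φ n x + φ (zpowIter f n x) := by
  rcases n with m | m
  · have h1 : (Int.ofNat m) + 1 = Int.ofNat (m + 1) := rfl
    rw [h1, zpowIter_ofNat]
    show (∑ i ∈ Finset.range (m+1), φ ((⇑f)^[i] x)) = (∑ i ∈ Finset.range m, φ ((⇑f)^[i] x)) + _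
    rw [Finset.sum_range_succ]
  · rcases m with _ | k
    · have h1 : (Int.negSucc 0) + 1 = Int.ofNat 0 := rfl
      rw [h1, zpowIter_negSucc]
      show (0:ℝ) = (-∑ i ∈ Finset.range 1, φ ((⇑f.symm)^[i+1] x)) + φ ((⇑f.symm)^[0+1] x)
      simp
    · have h1 : (Int.negSucc (k+1)) + 1 = Int.negSucc k := rfl
      rw [h1, zpowIter_negSucc]
      show (-∑ i ∈ Finset.range (k+1), φ ((⇑f.symm)^[i+1] x)) =
        (-∑ i ∈ Finset.range (k+2), φ ((⇑f.symm)^[i+1] x)) + φ ((⇑f.symm)^[(k+1)+1] x)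
      simp [Finset.sum_range_succ]

lemma cocycle_add (f : X ≃ₜ X) (φ : X → ℝ) (k m : ℤ) (x : X) :
    cocycle f φ (k + m) x = cocycle f φ k x + cocycle f φ m (zpowIter f k x) := by
  induction m using Int.induction_on with
  | zero => simp [cocycle_zero]
  | succ n ih =>
      have : k + ((n : ℤ) + 1) = (k + n) + 1 := by ring
      rw [this, cocycle_succ, ih, cocycle_succ, ← zpowIter_add f (n:ℤ) k x]
      ring
  | pred n ih =>
      have h1 : cocycle f φ ((-(n:ℤ) - 1) + 1) (zpowIter f k x)
          = cocycle f φ (-(n:ℤ) - 1) (zpowIter f k x) + φ (zpowIter f (-(n:ℤ)-1) (zpowIter f k x)) :=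
        cocycle_succ f φ _ _
      have h2 : cocycle f φ ((k + (-(n:ℤ) - 1)) + 1) x
          = cocycle f φ (k + (-(n:ℤ) - 1)) x + φ (zpowIter f (k + (-(n:ℤ)-1)) x) :=
        cocycle_succ f φ _ _
      have h3 : (-(n:ℤ) - 1) + 1 = -(n:ℤ) := by ring
      have h4 : (k + (-(n:ℤ) - 1)) + 1 = k + (-(n:ℤ)) := by ring
      rw [h3] at h1
      rw [h4] at h2
      rw [zpowIter_add f (-(n:ℤ)-1) k x] at h1
      rw [ih] at h2
      rw [h1] at h2
      linarith

def peakSet (f : X ≃ₜ X) (φ : X → ℝ) (x : X) : Set ℤ :=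
  {n : ℤ | ∀ m : ℤ, cocycle f φ m x ≤ cocycle f φ n x}

def finitePeaks (f : X ≃ₜ X) (φ : X → ℝ) (x : X) : Prop :=
  (peakSet f φ x).Nonempty ∧ (peakSet f φ x).Finite

noncomputable def lastPeak (f : X ≃ₜ X) (φ : X → ℝ) (x : X) : ℤ :=
  sSup (peakSet f φ x)

noncomputable def peakPos (f : X ≃ₜ X) (φ : X → ℝ) (x : X) : X :=
  zpowIter f (lastPeak f φ x) x

lemma mem_peakSet_shift (f : X ≃ₜ X) (φ : X → ℝ) (k n : ℤ) (x : X) :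
    n ∈ peakSet f φ (zpowIter f k x) ↔ k + n ∈ peakSet f φ x := by
  constructor
  · intro h m
    have h1 := h (m - k)
    have e1 : cocycle f φ m x = cocycle f φ k x + cocycle f φ (m - k) (zpowIter f k x) := by
      have h2 := cocycle_add f φ k (m - k) x
      rwa [show k + (m - k) = m by ring] at h2
    have e2 := cocycle_add f φ k n x
    linarith
  · intro h m
    have h1 := h (k + m)
    rw [cocycle_add f φ k m x, cocycle_add f φ k n x] at h1
    linarith

lemma lastPeak_shift (f : X ≃ₜ X) (φ : X → ℝ) (k : ℤ) (x : X) (hx : finitePeaks f φ x) :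
    lastPeak f φ (zpowIter f k x) = lastPeak f φ x - k := by
  obtain ⟨hne, hfin⟩ := hx
  have hmem : lastPeak f φ x ∈ peakSet f φ x := hne.csSup_mem hfin
  have hbdd : BddAbove (peakSet f φ x) := hfin.bddAbove
  apply IsGreatest.csSup_eq
  constructor
  · rw [mem_peakSet_shift]
    have : k + (lastPeak f φ x - k) = lastPeak f φ x := by ring
    rw [this]; exact hmem
  · intro n hn
    rw [mem_peakSet_shift] at hn
    have := le_csSup hbdd hn
    rw [lastPeak]
    omega

/-- the last peak position map π(x) = f^{n_f(x)}(x) is f-invariant on H(f,φ),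
    lies on the orbit of x, and is idempotent. -/
theorem peakPos_invariant [CompactSpace X] (f : X ≃ₜ X) (φ : X → ℝ) (hφ : Continuous φ)
    (x : X) (hx : finitePeaks f φ x) :
    (∀ k : ℤ, peakPos f φ (zpowIter f k x) = peakPos f φ x) ∧
      (∃ m : ℤ, peakPos f φ x = zpowIter f m x) ∧
      peakPos f φ (peakPos f φ x) = peakPos f φ x := by
  have inv : ∀ k : ℤ, peakPos f φ (zpowIter f k x) = peakPos f φ x := by
    intro k
    rw [peakPos, lastPeak_shift f φ k x hx, zpowIter_add]
    have : k + (lastPeak f φ x - k) = lastPeak f φ x := by ring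
    rw [this]; rfl
  refine ⟨inv, ⟨lastPeak f φ x, rfl⟩, ?_⟩
  exact inv (lastPeak f φ x)
end

section
/- The image W = π(H(f,φ)) of the last peak position map is a fundamental domain for f on H(f,φ): the sets f^n W, n ∈ ℤ, are pairwise disjoint and their union equals H(f,φ). -/
open Filter Topology MeasureTheory

variable {X : Type*} [MetricSpace X]

namespace FundDomAux

lemma zpowIter_eq_pow (f : X ≃ₜ X) (k : ℤ) (x : X) :
    zpowIter f k x = ((f.toEquiv : Equiv.Perm X) ^ k) x := by
  rcases k with n | n
  · simp only [zpowIter, Int.ofNat_eq_coe, Int.toNat_natCast, if_pos (Int.ofNat_nonneg n)]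
    rw [zpow_natCast, ← Equiv.Perm.iterate_eq_pow]
    rfl
  · have h : ¬ (0 : ℤ) ≤ Int.negSucc n := (Int.negSucc_lt_zero n).not_ge
    simp only [zpowIter, if_neg h]
    have hneg : -(Int.negSucc n) = (n : ℤ) + 1 := by rw [Int.negSucc_eq]; ring
    have : (-(Int.negSucc n)).toNat = n + 1 := by rw [hneg]; omega
    rw [this, zpow_negSucc, ← inv_pow, ← Equiv.Perm.iterate_eq_pow]
    rfl

lemma zpowIter_add (f : X ≃ₜ X) (m k : ℤ) (x : X) :
    zpowIter f m (zpowIter f k x) = zpowIter f (m + k) x := by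
  simp only [zpowIter_eq_pow, ← Equiv.Perm.mul_apply, ← zpow_add]

lemma zpowIter_zero (f : X ≃ₜ X) (x : X) : zpowIter f 0 x = x := rfl

lemma cocycle_zero (f : X ≃ₜ X) (φ : X → ℝ) (x : X) : cocycle f φ 0 x = 0 := by
  show cocycle f φ (Int.ofNat 0) x = 0
  simp [cocycle]

lemma cocycle_succ (f : X ≃ₜ X) (φ : X → ℝ) (n : ℤ) (x : X) :
    cocycle f φ (n + 1) x = cocycle f φ n x + φ (zpowIter f n x) := by
  rcases n with k | k
  · show cocycle f φ (Int.ofNat (k + 1)) x = _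
    have h0 : (0:ℤ) ≤ Int.ofNat k := Int.ofNat_nonneg k
    simp only [cocycle, zpowIter, if_pos h0, Int.toNat_natCast, Finset.sum_range_succ,
      Int.ofNat_eq_coe]
    simp
  · cases k with
    | zero =>
      have h1 : (Int.negSucc 0) + 1 = 0 := by decide
      rw [h1, cocycle_zero]
      have h : ¬ (0:ℤ) ≤ Int.negSucc 0 := by decide
      have ht : (-(Int.negSucc 0)).toNat = 1 := by decide
      simp only [cocycle, zpowIter, if_neg h, ht]
      simp
    | succ j =>
      have h1 : (Int.negSucc (j + 1)) + 1 = Int.negSucc j := by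
        rw [Int.negSucc_eq, Int.negSucc_eq]; push_cast; ring
      rw [h1]
      have h : ¬ (0:ℤ) ≤ Int.negSucc (j + 1) := (Int.negSucc_lt_zero _).not_ge
      have hneg : -(Int.negSucc (j + 1)) = (j : ℤ) + 2 := by rw [Int.negSucc_eq]; push_cast; ring
      have ht : (-(Int.negSucc (j + 1))).toNat = j + 2 := by rw [hneg]; omega
      simp only [cocycle, zpowIter, if_neg h, ht]
      rw [Finset.sum_range_succ _ (j + 1), show j + 1 + 1 = j + 2 from rfl]
      ring

lemma cocycle_pred (f : X ≃ₜ X) (φ : X → ℝ) (n : ℤ) (x : X) :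
    cocycle f φ (n - 1) x = cocycle f φ n x - φ (zpowIter f (n - 1) x) := by
  have := cocycle_succ f φ (n - 1) x
  rw [sub_add_cancel] at this
  linarith

lemma cocycle_shift (f : X ≃ₜ X) (φ : X → ℝ) (k : ℤ) (x : X) (m : ℤ) :
    cocycle f φ m (zpowIter f k x) = cocycle f φ (m + k) x - cocycle f φ k x := by
  induction m using Int.induction_on with
  | zero => rw [cocycle_zero, zero_add, sub_self]
  | succ i ih =>
      rw [cocycle_succ, ih, zpowIter_add]
      have : (i : ℤ) + 1 + k = (i + k) + 1 := by ring
      rw [this, cocycle_succ]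
      ring
  | pred i ih =>
      have h1 : (-(i:ℤ) - 1) = (-(i:ℤ)) - 1 := rfl
      rw [cocycle_pred, ih, zpowIter_add]
      have : (-(i:ℤ) - 1 + k) = (-(i:ℤ) + k) - 1 := by ring
      rw [this, cocycle_pred]
      ring

lemma mem_peakSet_shift (f : X ≃ₜ X) (φ : X → ℝ) (k : ℤ) (x : X) (n : ℤ) :
    n ∈ peakSet f φ (zpowIter f k x) ↔ n + k ∈ peakSet f φ x := by
  constructor
  · intro h m
    have := h (m - k)
    rw [cocycle_shift, cocycle_shift, sub_add_cancel] at this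
    linarith
  · intro h m
    rw [cocycle_shift, cocycle_shift]
    have := h (m + k)
    linarith

lemma peakSet_shift (f : X ≃ₜ X) (φ : X → ℝ) (k : ℤ) (x : X) :
    peakSet f φ (zpowIter f k x) = (fun n => n - k) '' peakSet f φ x := by
  ext n
  rw [mem_peakSet_shift]
  constructor
  · intro h; exact ⟨n + k, h, by ring⟩
  · rintro ⟨a, ha, rfl⟩; rwa [sub_add_cancel]

lemma finitePeaks_shift (f : X ≃ₜ X) (φ : X → ℝ) (k : ℤ) (x : X)
    (hx : finitePeaks f φ x) : finitePeaks f φ (zpowIter f k x) := by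
  rw [finitePeaks, peakSet_shift]
  exact ⟨hx.1.image _, hx.2.image _⟩

lemma finitePeaks_shift_iff (f : X ≃ₜ X) (φ : X → ℝ) (k : ℤ) (x : X) :
    finitePeaks f φ (zpowIter f k x) ↔ finitePeaks f φ x := by
  refine ⟨fun h => ?_, finitePeaks_shift f φ k x⟩
  have := finitePeaks_shift f φ (-k) _ h
  rwa [zpowIter_add, neg_add_cancel, zpowIter_zero] at this

lemma lastPeak_mem (f : X ≃ₜ X) (φ : X → ℝ) (x : X) (hx : finitePeaks f φ x) :
    lastPeak f φ x ∈ peakSet f φ x :=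
  hx.1.csSup_mem hx.2

lemma le_lastPeak (f : X ≃ₜ X) (φ : X → ℝ) (x : X) (hx : finitePeaks f φ x)
    {n : ℤ} (hn : n ∈ peakSet f φ x) : n ≤ lastPeak f φ x :=
  le_csSup hx.2.bddAbove hn

lemma lastPeak_shift (f : X ≃ₜ X) (φ : X → ℝ) (k : ℤ) (x : X)
    (hx : finitePeaks f φ x) :
    lastPeak f φ (zpowIter f k x) = lastPeak f φ x - k := by
  have hy : finitePeaks f φ (zpowIter f k x) := finitePeaks_shift f φ k x hx
  have hmem : lastPeak f φ x - k ∈ peakSet f φ (zpowIter f k x) := by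
    rw [mem_peakSet_shift, sub_add_cancel]
    exact lastPeak_mem f φ x hx
  refine le_antisymm (csSup_le hy.1 fun n hn => ?_) (le_lastPeak f φ _ hy hmem)
  rw [mem_peakSet_shift] at hn
  have := le_lastPeak f φ x hx hn
  omega

lemma finitePeaks_peakPos (f : X ≃ₜ X) (φ : X → ℝ) (x : X)
    (hx : finitePeaks f φ x) : finitePeaks f φ (peakPos f φ x) :=
  finitePeaks_shift f φ _ x hx

lemma lastPeak_peakPos (f : X ≃ₜ X) (φ : X → ℝ) (x : X)
    (hx : finitePeaks f φ x) : lastPeak f φ (peakPos f φ x) = 0 := by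
  rw [peakPos, lastPeak_shift f φ _ x hx, sub_self]

lemma mem_iterate_image_iff (f : X ≃ₜ X) (φ : X → ℝ) (n : ℤ) (y : X) :
    y ∈ zpowIter f n '' (peakPos f φ '' {x | finitePeaks f φ x}) ↔
      finitePeaks f φ y ∧ lastPeak f φ y = -n := by
  constructor
  · rintro ⟨_, ⟨x, hx, rfl⟩, rfl⟩
    have hw : finitePeaks f φ (peakPos f φ x) := finitePeaks_peakPos f φ x hx
    refine ⟨finitePeaks_shift f φ n _ hw, ?_⟩
    rw [lastPeak_shift f φ n _ hw, lastPeak_peakPos f φ x hx]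
    ring
  · rintro ⟨hy, hL⟩
    refine ⟨peakPos f φ y, ⟨y, hy, rfl⟩, ?_⟩
    rw [peakPos, zpowIter_add, hL]
    rw [add_neg_cancel, zpowIter_zero]

end FundDomAux

/-- W = π(H(f,φ)) is a fundamental domain: the iterates f^n W are pairwise
    disjoint and their union is H(f,φ). -/
theorem peakPos_image_fundamentalDomain [CompactSpace X] (f : X ≃ₜ X) (φ : X → ℝ)
    (hφ : Continuous φ) :
    (∀ m n : ℤ, m ≠ n →
        Disjoint (zpowIter f m '' (peakPos f φ '' {x | finitePeaks f φ x}))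
          (zpowIter f n '' (peakPos f φ '' {x | finitePeaks f φ x}))) ∧
      (⋃ n : ℤ, zpowIter f n '' (peakPos f φ '' {x | finitePeaks f φ x})) =
        {x | finitePeaks f φ x} := by
  constructor
  · intro m n hmn
    rw [Set.disjoint_left]
    intro y hym hyn
    rw [FundDomAux.mem_iterate_image_iff] at hym hyn
    exact hmn (by omega)
  · ext y
    simp only [Set.mem_iUnion, FundDomAux.mem_iterate_image_iff, Set.mem_setOf_eq]
    constructor
    · rintro ⟨n, hn, _⟩; exact hn
    · intro hy; exact ⟨-(lastPeak f φ y), hy, by ring⟩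
end

section
/- The set H(f,φ) of points with finite peaks is a Borel subset of X, and the last peak position map π: H(f,φ) → X is Borel measurable. -/
open Filter Topology MeasureTheory

variable {X : Type*} [MetricSpace X]

lemma cocycle_continuous (f : X ≃ₜ X) {φ : X → ℝ} (hφ : Continuous φ) (n : ℤ) :
    Continuous (cocycle f φ n) := by
  cases n with
  | ofNat n =>
    show Continuous fun x => ∑ i ∈ Finset.range n, φ ((⇑f)^[i] x)
    exact continuous_finset_sum _ fun i _ => hφ.comp (f.continuous.iterate i)
  | negSucc n =>
    show Continuous fun x => -∑ i ∈ Finset.range (n + 1), φ ((⇑f.symm)^[i + 1] x)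
    exact (continuous_finset_sum _ fun i _ => hφ.comp (f.symm.continuous.iterate (i + 1))).neg

lemma zpowIter_continuous (f : X ≃ₜ X) (k : ℤ) : Continuous (zpowIter f k) := by
  unfold zpowIter
  split_ifs with h
  · exact f.continuous.iterate _
  · exact f.symm.continuous.iterate _

lemma measurableSet_memPeak [MeasurableSpace X] [BorelSpace X]
    (f : X ≃ₜ X) {φ : X → ℝ} (hφ : Continuous φ) (n : ℤ) :
    MeasurableSet {x | n ∈ peakSet f φ x} := by
  have : {x | n ∈ peakSet f φ x} =
      ⋂ m : ℤ, {x | cocycle f φ m x ≤ cocycle f φ n x} := by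
    ext x; simp [peakSet]
  rw [this]
  exact MeasurableSet.iInter fun m =>
    measurableSet_le (cocycle_continuous f hφ m).measurable
      (cocycle_continuous f hφ n).measurable

lemma finitePeaks_iff (f : X ≃ₜ X) (φ : X → ℝ) (x : X) :
    finitePeaks f φ x ↔ ∃ n : ℤ, ∃ N : ℕ,
      n ∈ peakSet f φ x ∧ ∀ m : ℤ, (N : ℤ) < (m.natAbs : ℤ) → m ∉ peakSet f φ x := by
  constructor
  · rintro ⟨⟨n, hn⟩, hfin⟩
    obtain ⟨a, ha⟩ := hfin.bddAbove
    obtain ⟨b, hb⟩ := hfin.bddBelow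
    refine ⟨n, a.natAbs + b.natAbs, hn, fun m hm hmem => ?_⟩
    have h1 : m ≤ a := ha hmem
    have h2 : b ≤ m := hb hmem
    omega
  · rintro ⟨n, N, hn, hN⟩
    refine ⟨⟨n, hn⟩, (Set.finite_Icc (-(N : ℤ)) N).subset fun m hm => ?_⟩
    simp only [Set.mem_Icc]
    by_contra h
    exact hN m (by omega) hm

lemma lastPeak_eq_iff {f : X ≃ₜ X} {φ : X → ℝ} {x : X} (hx : finitePeaks f φ x) (k : ℤ) :
    lastPeak f φ x = k ↔ k ∈ peakSet f φ x ∧ ∀ m : ℤ, k < m → m ∉ peakSet f φ x := by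
  have hmem : sSup (peakSet f φ x) ∈ peakSet f φ x := hx.1.csSup_mem hx.2
  constructor
  · rintro rfl
    exact ⟨hmem, fun m hm hmem' =>
      absurd (le_csSup hx.2.bddAbove hmem') (not_le.2 hm)⟩
  · rintro ⟨h1, h2⟩
    refine le_antisymm (csSup_le hx.1 fun m hm => ?_) (le_csSup hx.2.bddAbove h1)
    by_contra h
    exact h2 m (by omega) hm

/-- H(f,φ) is a Borel set and the last peak position map is Borel measurable
    on H(f,φ). -/
theorem finitePeaks_measurable [CompactSpace X] [MeasurableSpace X] [BorelSpace X]
    (f : X ≃ₜ X) (φ : X → ℝ) (hφ : Continuous φ) :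
    MeasurableSet {x | finitePeaks f φ x} ∧
      Measurable (Set.restrict {x | finitePeaks f φ x} (peakPos f φ)) := by
  have hBk : ∀ k : ℤ, MeasurableSet
      {y | k ∈ peakSet f φ y ∧ ∀ m : ℤ, k < m → m ∉ peakSet f φ y} := by
    intro k
    have : {y | k ∈ peakSet f φ y ∧ ∀ m : ℤ, k < m → m ∉ peakSet f φ y} =
        {y | k ∈ peakSet f φ y} ∩ ⋂ m : ℤ, {y | k < m → m ∉ peakSet f φ y} := by
      ext y; simp [Set.mem_iInter]
    rw [this]
    refine (measurableSet_memPeak f hφ k).inter (MeasurableSet.iInter fun m => ?_)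
    by_cases h : k < m
    · have : {y | k < m → m ∉ peakSet f φ y} = {y | m ∈ peakSet f φ y}ᶜ := by
        ext y; simp [h]
      rw [this]; exact (measurableSet_memPeak f hφ m).compl
    · have : {y | k < m → m ∉ peakSet f φ y} = Set.univ := by
        ext y; simp [h]
      rw [this]; exact MeasurableSet.univ
  have hH : MeasurableSet {x | finitePeaks f φ x} := by
    have : {x | finitePeaks f φ x} = ⋃ n : ℤ, ⋃ N : ℕ,
        ({x | n ∈ peakSet f φ x} ∩
          ⋂ m : ℤ, {x | (N : ℤ) < (m.natAbs : ℤ) → m ∉ peakSet f φ x}) := by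
      ext x
      simp only [Set.mem_setOf_eq, Set.mem_iUnion, Set.mem_inter_iff, Set.mem_iInter,
        finitePeaks_iff f φ x]
    rw [this]
    refine MeasurableSet.iUnion fun n => MeasurableSet.iUnion fun N =>
      (measurableSet_memPeak f hφ n).inter (MeasurableSet.iInter fun m => ?_)
    by_cases h : (N : ℤ) < (m.natAbs : ℤ)
    · have : {x | (N : ℤ) < (m.natAbs : ℤ) → m ∉ peakSet f φ x} = {x | m ∈ peakSet f φ x}ᶜ := by
        simp only [Int.natCast_natAbs] at h
        ext y; simp [h]
      rw [this]; exact (measurableSet_memPeak f hφ m).compl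
    · have : {x | (N : ℤ) < (m.natAbs : ℤ) → m ∉ peakSet f φ x} = Set.univ := by
        simp only [Int.natCast_natAbs] at h
        ext y; simp [h]
      rw [this]; exact MeasurableSet.univ
  refine ⟨hH, ?_⟩
  set H := {x | finitePeaks f φ x}
  have hfiber : ∀ k : ℤ, MeasurableSet {x : H | lastPeak f φ x.val = k} := by
    intro k
    have : {x : H | lastPeak f φ x.val = k} =
        Subtype.val ⁻¹' {y | k ∈ peakSet f φ y ∧ ∀ m : ℤ, k < m → m ∉ peakSet f φ y} := by
      ext x
      simp only [Set.mem_setOf_eq, Set.mem_preimage]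
      exact lastPeak_eq_iff x.property k
    rw [this]
    exact measurable_subtype_coe (hBk k)
  intro s hs
  have heq : Set.restrict H (peakPos f φ) ⁻¹' s =
      ⋃ k : ℤ, {x : H | lastPeak f φ x.val = k} ∩
        ((fun x : H => zpowIter f k x.val) ⁻¹' s) := by
    ext x
    simp only [Set.mem_preimage, Set.restrict_apply, Set.mem_iUnion, Set.mem_inter_iff,
      Set.mem_setOf_eq, peakPos]
    constructor
    · intro h; exact ⟨lastPeak f φ x.val, rfl, h⟩
    · rintro ⟨k, hk, hks⟩; subst hk; exact hks
  rw [heq]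
  exact MeasurableSet.iUnion fun k => (hfiber k).inter
    (((zpowIter_continuous f k).measurable.comp measurable_subtype_coe) hs)
end
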